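/- Let f₁, f₂ be real numbers with f₁ + f₂ ≠ 0, and define the quadratic form H₂(q₁, q₂, u₁, u₂) = ((f₁+f₂)/2)((u₁ + q₂/2)² + (u₂ − q₁/2)²) − (f₁f₂/(2(f₁+f₂)))(q₁² + q₂²) on ℝ⁴, and the vectors e₁ = (2(f₁+f₂), 0, 0, f₂−f₁), e₂ = (0, 2(f₁+f₂), f₁−f₂, 0), e₃ = (0, 2(f₁+f₂), f₂−f₁, 0), e₄ = (2(f₁+f₂), 0, 0, f₁−f₂) in ℝ⁴. Then for all Q₁, P₁, Q₂, P₂ ∈ ℝ: H₂(Q₁e₁ + P₁e₂ + Q₂e₃ + P₂e₄) = (ω₁/2)(Q₁² + P₁²) − (ω₂/2)(Q₂² + P₂²), where ω₁ = 4(f₁−f₂)(f₁+f₂)f₁ and ω₂ = 4(f₁−f₂)(f₁+f₂)f₂. -/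

import Mathlib

/-!
In the coordinates `Q₁e₁ + P₁e₂ + Q₂e₃ + P₂e₄` one has `q = 2(f₁+f₂)(Q₁+P₂, P₁+Q₂)`,
`u₁ + q₂/2 = 2(f₁P₁ + f₂Q₂)` and `u₂ − q₁/2 = −2(f₁Q₁ + f₂P₂)`. Hence the potential term loses its
denominator `f₁ + f₂`, and the cross terms `Q₁P₂`, `P₁Q₂` of the kinetic and potential parts cancel.
-/

/-- The quadratic part of the reduced Hamiltonian in coordinates `(q₁, q₂, u₁, u₂)`. -/
noncomputable def H₂quad (f₁ f₂ q₁ q₂ u₁ u₂ : ℝ) : ℝ :=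
  (f₁ + f₂)/2 * ((u₁ + q₂/2)^2 + (u₂ - q₁/2)^2)
    - f₁ * f₂ / (2 * (f₁ + f₂)) * (q₁^2 + q₂^2)

theorem H₂quad_position_scaled (f₁ f₂ a b u₁ u₂ : ℝ) (h : f₁ + f₂ ≠ 0) :
    H₂quad f₁ f₂ (2 * (f₁ + f₂) * a) (2 * (f₁ + f₂) * b) u₁ u₂ =
      (f₁ + f₂) / 2 * ((u₁ + (f₁ + f₂) * b) ^ 2 + (u₂ - (f₁ + f₂) * a) ^ 2)
        - 2 * (f₁ + f₂) * f₁ * f₂ * (a ^ 2 + b ^ 2) := by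
  unfold H₂quad
  field_simp

/-- The linear normal form in Step 2 of the proof of Theorem 4.4: in the eigenvector
coordinates `e₁, e₂, e₃, e₄` the quadratic part `H₂` becomes
`(ω₁/2)(Q₁² + P₁²) − (ω₂/2)(Q₂² + P₂²)` with `ω_j = 4(f₁−f₂)(f₁+f₂)f_j`. -/
theorem stmt_17 (f₁ f₂ : ℝ) (h : f₁ + f₂ ≠ 0) :
    letI e₁ : Fin 4 → ℝ := ![2*(f₁ + f₂), 0, 0, f₂ - f₁]
    letI e₂ : Fin 4 → ℝ := ![0, 2*(f₁ + f₂), f₁ - f₂, 0]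
    letI e₃ : Fin 4 → ℝ := ![0, 2*(f₁ + f₂), f₂ - f₁, 0]
    letI e₄ : Fin 4 → ℝ := ![2*(f₁ + f₂), 0, 0, f₁ - f₂]
    letI ω₁ : ℝ := 4*(f₁ - f₂)*(f₁ + f₂)*f₁
    letI ω₂ : ℝ := 4*(f₁ - f₂)*(f₁ + f₂)*f₂
    ∀ Q₁ P₁ Q₂ P₂ : ℝ,
      letI v : Fin 4 → ℝ := Q₁ • e₁ + P₁ • e₂ + Q₂ • e₃ + P₂ • e₄
      H₂quad f₁ f₂ (v 0) (v 1) (v 2) (v 3)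
        = ω₁/2 * (Q₁^2 + P₁^2) - ω₂/2 * (Q₂^2 + P₂^2) := by
  intro Q₁ P₁ Q₂ P₂
  simp only [Pi.add_apply, Pi.smul_apply, smul_eq_mul, Matrix.cons_val_zero, Matrix.cons_val_one,
    Matrix.cons_val_two, Matrix.cons_val_three, Matrix.head_cons, Matrix.tail_cons, mul_zero,
    add_zero, zero_add]
  rw [show Q₁ * (2 * (f₁ + f₂)) + P₂ * (2 * (f₁ + f₂)) = 2 * (f₁ + f₂) * (Q₁ + P₂) by ring,
    show P₁ * (2 * (f₁ + f₂)) + Q₂ * (2 * (f₁ + f₂)) = 2 * (f₁ + f₂) * (P₁ + Q₂) by ring,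
    H₂quad_position_scaled _ _ _ _ _ _ h]
  ring
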